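/- (Strictness in Theorem 2(b)) Under the setting of Theorem 2(b), if there exists an assignment s ∈ Ω with P(s) > 0 and 0 < H(s) < M, then the inequality is strict: for every N ≥ 1, the mean squared error of the Rao-Blackwell estimator θ̂^rb is strictly smaller than the mean squared error of the standard estimator θ̂, where both are computed with respect to the N-fold product distribution P^N on Ω^N and the true marginal θ := Σ_{s : s ∘ X̂ = x̂} P(s). -/

import Mathlib

open scoped Classical
open Finset

/-- Action of a permutation of `Fin n` on an assignment `s : Fin n → V`:
`(g • s) i := s (g⁻¹ i)`. -/
def permAct {n : ℕ} {V : Type*} (g : Equiv.Perm (Fin n)) (s : Fin n → V) : Fin n → V :=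
  fun i => s (g⁻¹ i)

/-- Action of a permutation of `Fin n` on a tuple of indices `X : Fin k → Fin n`:
`(g • X) j := g (X j)`. -/
def tupleAct {n k : ℕ} (g : Equiv.Perm (Fin n)) (X : Fin k → Fin n) : Fin k → Fin n :=
  fun j => g (X j)

/-- The `G`-orbit of a tuple of indices, as a finset. -/
noncomputable def tupleOrbit {n k : ℕ} (G : Subgroup (Equiv.Perm (Fin n)))
    (X : Fin k → Fin n) : Finset (Fin k → Fin n) :=
  Finset.univ.filter (fun A => ∃ g ∈ G, tupleAct g X = A)

/-- The orbit Hamming weight of `s` w.r.t. the marginal assignment `X̂ = x̂`: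
the number of tuples `A` in the `G`-orbit of `X̂` with `s ∘ A = x̂`. -/
noncomputable def orbitHammingWeight {n k : ℕ} {V : Type*} [Fintype V] [DecidableEq V]
    (G : Subgroup (Equiv.Perm (Fin n))) (X : Fin k → Fin n) (xhat : Fin k → V)
    (s : Fin n → V) : ℕ :=
  ((tupleOrbit G X).filter (fun A => s ∘ A = xhat)).card

/-! Both estimators are sample means of `N` i.i.d. copies of a statistic with mean `θ`: the
indicator of `s ∘ X̂ = x̂`, and `H / M`, whose mean is also `θ` because the `G`-invariance of `P`
makes every tuple of the orbit see the value `x̂` with the same probability. Hence each mean squared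
error is the variance of its statistic divided by `N`. The indicator has second moment `θ`, while
`H / M` takes values in `[0, 1]` and lies strictly inside `(0, 1)` on an atom of `P`, so its second
moment is strictly smaller than `θ`. -/

section ProductMoments

variable {Ω : Type*} [Fintype Ω] {N : ℕ}

theorem sum_prod_mul_prod_apply (P : Ω → ℝ) (F : Fin N → Ω → ℝ) :
    ∑ ss : Fin N → Ω, (∏ l, P (ss l)) * ∏ l, F l (ss l) = ∏ l, ∑ s, P s * F l s := by
  simp_rw [← prod_mul_distrib]
  exact (prod_univ_sum (fun _ => univ) fun l s => P s * F l s).symm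

theorem sum_prod_mul_apply {P : Ω → ℝ} (hP : ∑ s, P s = 1) (h : Ω → ℝ) (i : Fin N) :
    ∑ ss : Fin N → Ω, (∏ l, P (ss l)) * h (ss i) = ∑ s, P s * h s := by
  have := sum_prod_mul_prod_apply P fun l s => if l = i then h s else 1
  simpa [apply_ite, hP] using this

theorem sum_prod_mul_apply_mul_apply {P : Ω → ℝ} (hP : ∑ s, P s = 1) (h₁ h₂ : Ω → ℝ)
    {i j : Fin N} (hij : i ≠ j) :
    ∑ ss : Fin N → Ω, (∏ l, P (ss l)) * (h₁ (ss i) * h₂ (ss j)) =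
      (∑ s, P s * h₁ s) * ∑ s, P s * h₂ s := by
  have hfactor (l : Fin N) :
      ∑ s, P s * ((if l = i then h₁ s else 1) * (if l = j then h₂ s else 1)) =
        (if l = i then ∑ s, P s * h₁ s else 1) * (if l = j then ∑ s, P s * h₂ s else 1) := by
    by_cases hi : l = i
    · subst hi
      simp [hij]
    · by_cases hj : l = j <;> simp [hi, hj, hP, hij.symm]
  have := sum_prod_mul_prod_apply P fun l s =>
    (if l = i then h₁ s else 1) * (if l = j then h₂ s else 1)
  simpa only [prod_mul_distrib, hfactor, prod_ite_eq', mem_univ, if_true] using this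

noncomputable def sampleMeanMSE (P h : Ω → ℝ) (θ : ℝ) (N : ℕ) : ℝ :=
  ∑ ss : Fin N → Ω, (∏ i, P (ss i)) * ((1 / (N : ℝ)) * (∑ i, h (ss i)) - θ) ^ 2

theorem sampleMeanMSE_eq_sum_mul_sub_sq_div {P : Ω → ℝ} (hP : ∑ s, P s = 1) (hN : N ≠ 0)
    {h : Ω → ℝ} {θ : ℝ} (hθ : ∑ s, P s * h s = θ) :
    sampleMeanMSE P h θ N = (∑ s, P s * (h s - θ) ^ 2) / N := by
  set c : Ω → ℝ := fun s => h s - θ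
  have hc : ∑ s, P s * c s = 0 := by
    simp [c, mul_sub, sum_sub_distrib, ← sum_mul, hP, hθ]
  -- independence kills the off-diagonal terms because `c` is centred
  have hcross (i j : Fin N) : ∑ ss : Fin N → Ω, (∏ l, P (ss l)) * (c (ss i) * c (ss j)) =
      if i = j then ∑ s, P s * c s ^ 2 else 0 := by
    split_ifs with hij
    · subst hij
      simpa only [← sq] using sum_prod_mul_apply hP (fun s => c s ^ 2) i
    · simp [sum_prod_mul_apply_mul_apply hP c c hij, hc]
  have hcentre (ss : Fin N → Ω) :
      (1 / (N : ℝ)) * (∑ i, h (ss i)) - θ = (1 / N) * ∑ i, c (ss i) := by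
    simp only [c, sum_sub_distrib, sum_const, card_univ, Fintype.card_fin, nsmul_eq_mul]
    field_simp
  calc sampleMeanMSE P h θ N
      = ∑ i, ∑ j, ∑ ss : Fin N → Ω, (∏ l, P (ss l)) * ((1 / N) ^ 2 * (c (ss i) * c (ss j))) := by
        simp_rw [sampleMeanMSE, hcentre, mul_pow, sq (∑ i, c _), sum_mul_sum, mul_sum]
        rw [sum_comm]
        exact sum_congr rfl fun i _ => sum_comm
    _ = (1 / N) ^ 2 * ∑ i, ∑ j, ∑ ss : Fin N → Ω, (∏ l, P (ss l)) * (c (ss i) * c (ss j)) := by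
        simp only [mul_left_comm _ ((1 / (N : ℝ)) ^ 2), mul_sum]
    _ = (∑ s, P s * (h s - θ) ^ 2) / N := by
        simp only [hcross, sum_ite_eq, mem_univ, if_true, sum_const, card_univ, Fintype.card_fin,
          nsmul_eq_mul]
        field_simp
        rfl

end ProductMoments

section Variance

variable {Ω : Type*} [Fintype Ω] {P : Ω → ℝ}

theorem sum_mul_sq_lt_sum_mul (hP0 : ∀ s, 0 ≤ P s) {f : Ω → ℝ} (hf : ∀ s, f s ∈ Set.Icc 0 1)
    (hstrict : ∃ s, 0 < P s ∧ f s ∈ Set.Ioo 0 1) :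
    ∑ s, P s * f s ^ 2 < ∑ s, P s * f s := by
  obtain ⟨s₀, hPs₀, hfs₀⟩ := hstrict
  refine sum_lt_sum (fun s _ => ?_) ⟨s₀, mem_univ _, ?_⟩
  · have := hf s
    exact mul_le_mul_of_nonneg_left (by nlinarith [this.1, this.2]) (hP0 s)
  · exact mul_lt_mul_of_pos_left (by nlinarith [hfs₀.1, hfs₀.2]) hPs₀

theorem sum_mul_sub_sq_lt_of_sum_mul_sq_lt {f g : Ω → ℝ} {θ : ℝ}
    (hf : ∑ s, P s * f s = θ) (hg : ∑ s, P s * g s = θ)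
    (hsq : ∑ s, P s * f s ^ 2 < ∑ s, P s * g s ^ 2) :
    ∑ s, P s * (f s - θ) ^ 2 < ∑ s, P s * (g s - θ) ^ 2 := by
  have expand (h : Ω → ℝ) : ∑ s, P s * (h s - θ) ^ 2 =
      ∑ s, P s * h s ^ 2 - 2 * θ * ∑ s, P s * h s + θ ^ 2 * ∑ s, P s := by
    simp only [mul_sum, ← sum_sub_distrib, ← sum_add_distrib]
    exact sum_congr rfl fun s _ => by ring
  rw [expand, expand, hf, hg]
  linarith

end Variance

section Orbit

variable {n k : ℕ} (G : Subgroup (Equiv.Perm (Fin n))) (X : Fin k → Fin n)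

theorem mem_tupleOrbit_self : X ∈ tupleOrbit G X :=
  mem_filter.2 ⟨mem_univ _, 1, G.one_mem, rfl⟩

theorem tupleOrbit_card_pos : 0 < #(tupleOrbit G X) :=
  card_pos.2 ⟨X, mem_tupleOrbit_self G X⟩

variable {V : Type*} [Fintype V] [DecidableEq V] (xhat : Fin k → V)

theorem orbitHammingWeight_le_card (s : Fin n → V) :
    orbitHammingWeight G X xhat s ≤ #(tupleOrbit G X) :=
  card_filter_le _ _

variable {G X} {P : (Fin n → V) → ℝ}

theorem sum_filter_comp_eq_of_mem_tupleOrbit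
    (hPG : ∀ g ∈ G, ∀ s : Fin n → V, P (permAct g s) = P s)
    {A : Fin k → Fin n} (hA : A ∈ tupleOrbit G X) :
    ∑ s ∈ univ.filter (fun s : Fin n → V => s ∘ A = xhat), P s =
      ∑ s ∈ univ.filter (fun s : Fin n → V => s ∘ X = xhat), P s := by
  obtain ⟨g, hg, rfl⟩ := (mem_filter.1 hA).2
  have hact (t : Fin n → V) : Equiv.arrowCongr g (Equiv.refl V) t = permAct g t := rfl
  have hcomp (t : Fin n → V) : permAct g t ∘ tupleAct g X = t ∘ X := by
    funext j
    simp [permAct, tupleAct]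
  rw [sum_filter, sum_filter, ← (Equiv.arrowCongr g (Equiv.refl V)).sum_comp]
  simp only [hact, hcomp, hPG g hg]

theorem sum_mul_orbitHammingWeight
    (hPG : ∀ g ∈ G, ∀ s : Fin n → V, P (permAct g s) = P s) :
    ∑ s, P s * orbitHammingWeight G X xhat s =
      #(tupleOrbit G X) * ∑ s ∈ univ.filter (fun s : Fin n → V => s ∘ X = xhat), P s := by
  calc ∑ s, P s * orbitHammingWeight G X xhat s
      = ∑ A ∈ tupleOrbit G X, ∑ s ∈ univ.filter (fun s : Fin n → V => s ∘ A = xhat), P s := by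
        simp only [orbitHammingWeight, card_filter, Nat.cast_sum, mul_sum, sum_filter]
        rw [sum_comm]
        simp
    _ = _ := by
        rw [sum_congr rfl fun A hA => sum_filter_comp_eq_of_mem_tupleOrbit xhat hPG hA]
        simp

theorem sum_mul_orbitHammingWeight_div_card
    (hPG : ∀ g ∈ G, ∀ s : Fin n → V, P (permAct g s) = P s) :
    ∑ s, P s * (orbitHammingWeight G X xhat s / #(tupleOrbit G X)) =
      ∑ s ∈ univ.filter (fun s : Fin n → V => s ∘ X = xhat), P s := by
  have hM : (#(tupleOrbit G X) : ℝ) ≠ 0 := by exact_mod_cast (tupleOrbit_card_pos G X).ne'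
  simp only [mul_div_assoc', ← sum_div, sum_mul_orbitHammingWeight xhat hPG]
  exact mul_div_cancel_left₀ _ hM

end Orbit

theorem rao_blackwell_mse_lt_standard_mse_general
    (n k : ℕ)
    (V : Type*) [Fintype V] [DecidableEq V]
    (G : Subgroup (Equiv.Perm (Fin n)))
    (Xhat : Fin k → Fin n)
    (xhat : Fin k → V)
    (P : (Fin n → V) → ℝ)
    (hP0 : ∀ s, 0 ≤ P s)
    (hP1 : ∑ s : Fin n → V, P s = 1)
    (hPG : ∀ g ∈ G, ∀ s : Fin n → V, P (permAct g s) = P s)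
    (hstrict : ∃ s : Fin n → V, 0 < P s ∧ 0 < orbitHammingWeight G Xhat xhat s ∧
      orbitHammingWeight G Xhat xhat s < (tupleOrbit G Xhat).card)
    (N : ℕ) (hN : 1 ≤ N) :
    ∑ ss : Fin N → (Fin n → V),
        (∏ i, P (ss i)) *
          ((1 / (N : ℝ)) * (∑ i, (orbitHammingWeight G Xhat xhat (ss i) : ℝ) /
              ((tupleOrbit G Xhat).card : ℝ)) -
            ∑ s ∈ Finset.univ.filter (fun s : Fin n → V => s ∘ Xhat = xhat), P s) ^ 2 <
      ∑ ss : Fin N → (Fin n → V),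
        (∏ i, P (ss i)) *
          ((1 / (N : ℝ)) * (∑ i, if ss i ∘ Xhat = xhat then (1 : ℝ) else 0) -
            ∑ s ∈ Finset.univ.filter (fun s : Fin n → V => s ∘ Xhat = xhat), P s) ^ 2 := by
  set θ := ∑ s ∈ univ.filter (fun s : Fin n → V => s ∘ Xhat = xhat), P s
  have hM : (0 : ℝ) < #(tupleOrbit G Xhat) := by exact_mod_cast tupleOrbit_card_pos G Xhat
  set rb : (Fin n → V) → ℝ := fun s => orbitHammingWeight G Xhat xhat s / #(tupleOrbit G Xhat)
  set ind : (Fin n → V) → ℝ := fun s => if s ∘ Xhat = xhat then 1 else 0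
  have hrb : ∑ s, P s * rb s = θ := sum_mul_orbitHammingWeight_div_card xhat hPG
  have hind : ∑ s, P s * ind s = θ := by
    simp [ind, θ, sum_filter]
  have hind_sq : ∑ s, P s * ind s ^ 2 = θ := by
    simpa [ind] using hind
  have hrb_sq : ∑ s, P s * rb s ^ 2 < θ := by
    refine hrb ▸ sum_mul_sq_lt_sum_mul hP0 (fun s => ⟨by positivity, ?_⟩) ?_
    · exact div_le_one_of_le₀ (by exact_mod_cast orbitHammingWeight_le_card G Xhat xhat s) hM.le
    · obtain ⟨s, hPs, hpos, hlt⟩ := hstrict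
      exact ⟨s, hPs, div_pos (by exact_mod_cast hpos) hM, (div_lt_one hM).2 (by exact_mod_cast hlt)⟩
  change sampleMeanMSE P rb θ N < sampleMeanMSE P ind θ N
  rw [sampleMeanMSE_eq_sum_mul_sub_sq_div hP1 (by omega) hrb,
    sampleMeanMSE_eq_sum_mul_sub_sq_div hP1 (by omega) hind]
  refine div_lt_div_of_pos_right ?_ (by positivity)
  exact sum_mul_sub_sq_lt_of_sum_mul_sq_lt hrb hind (hind_sq ▸ hrb_sq)

/-- strictness in Theorem 2(b): if some assignment `s` has positive density
and `0 < H(s) < M`, then for every `N ≥ 1` the mean squared error of the Rao-Blackwell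
estimator is strictly smaller than that of the standard estimator. -/
theorem rao_blackwell_mse_lt_standard_mse
    (n k : ℕ) (hn : 0 < n) (hk : 0 < k)
    (V : Type*) [Fintype V] [Nonempty V] [DecidableEq V]
    (G : Subgroup (Equiv.Perm (Fin n)))
    (Xhat : Fin k → Fin n) (hX : Function.Injective Xhat)
    (xhat : Fin k → V)
    (P : (Fin n → V) → ℝ)
    (hP0 : ∀ s, 0 ≤ P s)
    (hP1 : ∑ s : Fin n → V, P s = 1)
    (hPG : ∀ g ∈ G, ∀ s : Fin n → V, P (permAct g s) = P s)
    (hstrict : ∃ s : Fin n → V, 0 < P s ∧ 0 < orbitHammingWeight G Xhat xhat s ∧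
      orbitHammingWeight G Xhat xhat s < (tupleOrbit G Xhat).card)
    (N : ℕ) (hN : 1 ≤ N) :
    ∑ ss : Fin N → (Fin n → V),
        (∏ i, P (ss i)) *
          ((1 / (N : ℝ)) * (∑ i, (orbitHammingWeight G Xhat xhat (ss i) : ℝ) /
              ((tupleOrbit G Xhat).card : ℝ)) -
            ∑ s ∈ Finset.univ.filter (fun s : Fin n → V => s ∘ Xhat = xhat), P s) ^ 2 <
      ∑ ss : Fin N → (Fin n → V),
        (∏ i, P (ss i)) *
          ((1 / (N : ℝ)) * (∑ i, if ss i ∘ Xhat = xhat then (1 : ℝ) else 0) -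
            ∑ s ∈ Finset.univ.filter (fun s : Fin n → V => s ∘ Xhat = xhat), P s) ^ 2 :=
  rao_blackwell_mse_lt_standard_mse_general n k V G Xhat xhat P hP0 hP1 hPG hstrict N hN
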